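/- The discrete Wigner function of a Hermitian matrix is real-valued: if ρ : Matrix (ZMod d) (ZMod d) ℂ satisfies ρᴴ = ρ, then for every u ∈ ZMod d × ZMod d, the imaginary part of trace(A_u * ρ) is 0. -/

import Mathlib

/-!
Writing `ω ^ k` as the standard additive character `ψ` of `ZMod d`, the entries of `T_a` are
`T_a x y = ψ (a₁ x - 2⁻¹ a₁ a₂)` for `x = y + a₂` and `0` otherwise. The entry `(T_aᴴ) x y` is
then supported on `x = y - a₂` with phase `ψ (-a₁ (x + a₂) + 2⁻¹ a₁ a₂)`, which is the phase of
`T_{-a}` because `2 * 2⁻¹ = 1` for odd `d`. Hence `T_aᴴ = T_{-a}`, the sum defining `A_0` is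
Hermitian, and so is every `A_u`; the trace of a product of two Hermitian matrices is real.
-/

open Matrix Complex

/-- ω = exp(2πi/d). -/
noncomputable def omegaC (d : ℕ) : ℂ := Complex.exp (2 * Real.pi * Complex.I / d)

/-- The clock matrix `Z`, with `Z x x = ω ^ x.val`. -/
noncomputable def Zmat (d : ℕ) : Matrix (ZMod d) (ZMod d) ℂ :=
  Matrix.diagonal (fun x => omegaC d ^ x.val)

/-- The shift matrix `X`, with `X x y = 1` iff `x = y + 1`. -/
noncomputable def Xmat (d : ℕ) : Matrix (ZMod d) (ZMod d) ℂ :=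
  Matrix.of fun x y => if x = y + 1 then 1 else 0

/-- The Heisenberg–Weyl operator `T_a`. -/
noncomputable def TW (d : ℕ) [NeZero d] (a : ZMod d × ZMod d) : Matrix (ZMod d) (ZMod d) ℂ :=
  omegaC d ^ ((-((2 : ZMod d)⁻¹ * a.1 * a.2)).val) • (Zmat d ^ a.1.val * Xmat d ^ a.2.val)

/-- The phase point operator at the origin, `A_0 = (1/d) • ∑ a, T_a`. -/
noncomputable def Apoint0 (d : ℕ) [NeZero d] : Matrix (ZMod d) (ZMod d) ℂ :=
  (1 / (d : ℂ)) • ∑ a : ZMod d × ZMod d, TW d a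

/-- The phase point operator `A_u = T_u * A_0 * T_uᴴ`. -/
noncomputable def Apoint (d : ℕ) [NeZero d] (u : ZMod d × ZMod d) : Matrix (ZMod d) (ZMod d) ℂ :=
  TW d u * Apoint0 d * (TW d u)ᴴ

namespace Matrix

variable {n R : Type*} [Fintype n] [CommSemiring R] [StarRing R]

theorem IsHermitian.isSelfAdjoint_trace_mul {A B : Matrix n n R} (hA : A.IsHermitian)
    (hB : B.IsHermitian) : IsSelfAdjoint (A * B).trace := by
  rw [IsSelfAdjoint, ← trace_conjTranspose, conjTranspose_mul, hA.eq, hB.eq, trace_mul_comm]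

end Matrix

section HeisenbergWeyl

variable {d : ℕ} [NeZero d]

theorem omegaC_pow (k : ℕ) : omegaC d ^ k = ZMod.stdAddChar (k : ZMod d) := by
  rw [ZMod.stdAddChar_apply, ZMod.toCircle_natCast, omegaC, ← Complex.exp_nat_mul]
  ring_nf

theorem omegaC_pow_val (z : ZMod d) : omegaC d ^ z.val = ZMod.stdAddChar z := by
  rw [omegaC_pow, ZMod.natCast_zmod_val]

theorem Xmat_pow_apply (m : ℕ) (x y : ZMod d) :
    (Xmat d ^ m) x y = if x = y + m then 1 else 0 := by
  induction m generalizing y with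
  | zero => simp [one_apply]
  | succ m ih =>
    rw [pow_succ, mul_apply, Finset.sum_eq_single (y + 1) (fun z _ hz => by simp [Xmat, hz])
      (by simp), ih, Xmat, of_apply, if_pos rfl, mul_one, Nat.cast_succ, add_right_comm y 1,
      add_assoc]

theorem TW_apply (a : ZMod d × ZMod d) (x y : ZMod d) :
    TW d a x y =
      if x = y + a.2 then ZMod.stdAddChar (a.1 * x - 2⁻¹ * a.1 * a.2) else 0 := by
  rw [TW, Zmat, diagonal_pow, Matrix.smul_apply, diagonal_mul, Xmat_pow_apply,
    ZMod.natCast_zmod_val, Pi.pow_apply, ← pow_mul, omegaC_pow_val, omegaC_pow, smul_eq_mul]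
  split_ifs
  · rw [mul_one, ← AddChar.map_add_eq_mul]
    congr 1
    push_cast [ZMod.natCast_zmod_val]
    ring
  · rw [mul_zero, mul_zero]

theorem TW_conjTranspose (hodd : Odd d) (a : ZMod d × ZMod d) : (TW d a)ᴴ = TW d (-a) := by
  have two_mul_inv_two : (2 : ZMod d) * 2⁻¹ = 1 :=
    ZMod.mul_inv_of_unit _ <| by
      exact_mod_cast (ZMod.isUnit_iff_coprime 2 d).mpr hodd.coprime_two_left
  ext x y
  rw [conjTranspose_apply, TW_apply, TW_apply, Prod.fst_neg, Prod.snd_neg]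
  by_cases hyx : y = x + a.2
  · subst hyx
    rw [if_pos rfl, if_pos (by ring), star_def, ← AddChar.map_neg_eq_conj]
    congr 1
    linear_combination (a.1 * a.2) * two_mul_inv_two
  · rw [if_neg hyx, if_neg (fun h => hyx (by rw [h]; ring)), star_zero]

theorem Apoint0_isHermitian (hodd : Odd d) : (Apoint0 d).IsHermitian := by
  rw [IsHermitian, Apoint0, conjTranspose_smul, conjTranspose_sum]
  congr 1
  · simp
  · simp_rw [TW_conjTranspose hodd]
    exact Fintype.sum_equiv (Equiv.neg _) _ _ fun a => by simp

theorem Apoint_isHermitian (hodd : Odd d) (u : ZMod d × ZMod d) : (Apoint d u).IsHermitian :=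
  isHermitian_mul_mul_conjTranspose _ (Apoint0_isHermitian hodd)

end HeisenbergWeyl

theorem wigner_real_valued_general (d : ℕ) [NeZero d] (hodd : Odd d)
    (ρ : Matrix (ZMod d) (ZMod d) ℂ) (hρ : ρᴴ = ρ) (u : ZMod d × ZMod d) :
    ((Apoint d u * ρ).trace).im = 0 :=
  Complex.conj_eq_iff_im.mp ((Apoint_isHermitian hodd u).isSelfAdjoint_trace_mul hρ)

/-- The discrete Wigner function of a Hermitian matrix is real-valued. -/
theorem wigner_real_valued (d : ℕ) [NeZero d] (hodd : Odd d) (hd : 1 < d)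
    (ρ : Matrix (ZMod d) (ZMod d) ℂ) (hρ : ρᴴ = ρ) (u : ZMod d × ZMod d) :
    ((Apoint d u * ρ).trace).im = 0 :=
  wigner_real_valued_general d hodd ρ hρ u
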